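/- If a feasible 2-Visits schedule places some secondary visit at a non-gap position p (i.e., p is an element of the discretized sequence), then there exists some primary visit at a position q < p belonging to a task u with d_u ≥ p. -/
import Mathlib


/-- Auxiliary recursion for the discretized sequence, counting down from the top index. -/
def discAux (d : ℕ → ℕ) (n : ℕ) : ℕ → ℕ
  | 0 => d (n - 1)
  | k + 1 => min (discAux d n k - 1) (d (n - 1 - (k + 1)))

/-- The discretized sequence of `d` (of length `n`): `a (n-1) = d (n-1)` and
`a i = min (a (i+1) - 1) (d i)` for `i < n - 1`. -/
def disc (d : ℕ → ℕ) (n : ℕ) (i : ℕ) : ℕ := discAux d n (n - 1 - i)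
/-- A feasible 2-Visits schedule: each task `i < n` has a primary position `p i`
and a secondary position `s i`, all `2n` positions in `[1, 2n]` and pairwise distinct,
with `p i ≤ d i` and `s i < p i ∨ s i ≤ p i + d i`. -/
def Feasible2V (n : ℕ) (d p s : ℕ → ℕ) : Prop :=
  (∀ i < n, 1 ≤ p i ∧ p i ≤ 2 * n ∧ 1 ≤ s i ∧ s i ≤ 2 * n) ∧
  (∀ i < n, ∀ j < n, i ≠ j → p i ≠ p j) ∧
  (∀ i < n, ∀ j < n, i ≠ j → s i ≠ s j) ∧
  (∀ i < n, ∀ j < n, p i ≠ s j) ∧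
  (∀ i < n, p i ≤ d i) ∧
  (∀ i < n, s i < p i ∨ s i ≤ p i + d i)

lemma disc_last (d : ℕ → ℕ) (n : ℕ) : disc d n (n - 1) = d (n - 1) := by
  unfold disc
  rw [Nat.sub_self]
  rfl

lemma disc_succ (d : ℕ → ℕ) (n : ℕ) (i : ℕ) (h : i + 1 < n) :
    disc d n i = min (disc d n (i + 1) - 1) (d i) := by
  unfold disc
  have h1 : n - 1 - i = (n - 1 - (i + 1)) + 1 := by omega
  rw [h1]
  show min (discAux d n (n - 1 - (i+1)) - 1) (d (n - 1 - (n - 1 - (i+1) + 1))) = _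
  congr 2
  omega

lemma disc_le (d : ℕ → ℕ) (n : ℕ) (i : ℕ) (h : i < n) : disc d n i ≤ d i := by
  by_cases h1 : i + 1 < n
  · rw [disc_succ d n i h1]; exact min_le_right _ _
  · have : i = n - 1 := by omega
    rw [this, disc_last]

lemma disc_step (d : ℕ → ℕ) (n : ℕ) (i : ℕ) (h : i + 1 < n) :
    disc d n i ≤ disc d n (i + 1) := by
  rw [disc_succ d n i h]
  exact le_trans (min_le_left _ _) (Nat.sub_le _ _)

lemma disc_mono (d : ℕ → ℕ) (n : ℕ) : ∀ k i, i + k < n → disc d n i ≤ disc d n (i + k) := by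
  intro k
  induction k with
  | zero => intro i _; rfl
  | succ k ih =>
    intro i h
    have h1 : i + 1 < n := by omega
    have := ih (i + 1) (by omega)
    calc disc d n i ≤ disc d n (i + 1) := disc_step d n i h1
      _ ≤ disc d n (i + 1 + k) := this
      _ = disc d n (i + (k + 1)) := by ring_nf

lemma disc_chain (d : ℕ → ℕ) (n : ℕ) :
    ∀ k i, n - 1 - i = k → i < n → 1 ≤ disc d n i →
      ∃ j, i ≤ j ∧ j < n ∧ d j = disc d n i + (j - i) := by
  intro k
  induction k with
  | zero =>
    intro i hk hi _
    have hei : i = n - 1 := by omega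
    exact ⟨i, le_rfl, hi, by rw [hei, disc_last]; omega⟩
  | succ k ih =>
    intro i hk hi hm
    have h1 : i + 1 < n := by omega
    by_cases hd : disc d n i = d i
    · exact ⟨i, le_rfl, hi, by omega⟩
    · have hrec := disc_succ d n i h1
      have hle : disc d n i ≤ d i := disc_le d n i hi
      have heq : disc d n i = disc d n (i + 1) - 1 := by
        rcases min_cases (disc d n (i + 1) - 1) (d i) with ⟨h2, _⟩ | ⟨h2, _⟩
        · omega
        · omega
      have hm1 : disc d n (i + 1) = disc d n i + 1 := by omega
      obtain ⟨j, hj1, hj2, hj3⟩ := ih (i + 1) (by omega) h1 (by omega)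
      exact ⟨j, by omega, hj2, by omega⟩

theorem stmt_4 (n : ℕ) (d p s : ℕ → ℕ) (hpos : ∀ i < n, 0 < d i)
    (hmono : ∀ i j, i ≤ j → j < n → d i ≤ d j)
    (hf : Feasible2V n d p s)
    (v : ℕ) (hv : v < n) (hnongap : ∃ i < n, s v = disc d n i) :
    ∃ u < n, p u < s v ∧ s v ≤ d u := by

  obtain ⟨i, hi, hsi⟩ := hnongap
  obtain ⟨hP, hPP, hSS, hPS, hPd, hS⟩ := hf
  have hm1 : 1 ≤ s v := (hP v hv).2.2.1
  by_contra hcon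
  push_neg at hcon
  obtain ⟨j, hij, hjn, hdj⟩ := disc_chain d n (n - 1 - i) i rfl hi (by omega)
  have key : ∀ t ∈ Finset.Icc i j, p t ∈ Finset.Ioc (s v) (s v + (j - i)) := by
    intro t ht
    rw [Finset.mem_Icc] at ht
    have htn : t < n := lt_of_le_of_lt ht.2 hjn
    have hdt : s v ≤ d t := by
      have h2 : disc d n i ≤ disc d n t := by
        have := disc_mono d n (t - i) i (by omega)
        rwa [Nat.add_sub_cancel' ht.1] at this
      have h3 := disc_le d n t htn
      omega
    have hpt : ¬ p t < s v := fun h => absurd hdt (not_le.2 (hcon t htn h))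
    have hne : p t ≠ s v := hPS t htn v hv
    have hub : p t ≤ s v + (j - i) := by
      have := hmono t j ht.2 hjn
      have := hPd t htn
      omega
    rw [Finset.mem_Ioc]
    omega
  have hinj : Set.InjOn p (Finset.Icc i j) := by
    intro a ha b hb hab
    rw [Finset.coe_Icc, Set.mem_Icc] at ha hb
    by_contra hne
    exact hPP a (lt_of_le_of_lt ha.2 hjn) b (lt_of_le_of_lt hb.2 hjn) hne hab
  have hcard := Finset.card_le_card_of_injOn p key hinj
  rw [Nat.card_Icc, Nat.card_Ioc] at hcard
  omega
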